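/- arXiv:1411.4741 — 4 statements merged into one kernel-verified Lean document; each statement's English description precedes it below -/
import Mathlib

section
/- On a 2-torus T² = ℂ/Γ with metric e^{2μ}(dx²+dy²) (μ being Γ-periodic and smooth), the kernel of the operator pd acting on trace-free symmetric rank m tensor fields is two-dimensional: it consists exactly of fields f with f_{1…1} = e^{2mμ}c¹ and f_{1…12} = e^{2mμ}c² for constants c¹, c² ∈ ℝ (or ℂ). -/
open Complex in
lemma holo_of_CR (U V : ℝ × ℝ → ℝ) (hU : Differentiable ℝ U) (hV : Differentiable ℝ V)
    (h1 : ∀ q, fderiv ℝ U q (1,0) = fderiv ℝ V q (0,1))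
    (h2 : ∀ q, fderiv ℝ U q (0,1) = - fderiv ℝ V q (1,0)) :
    Differentiable ℂ (fun z : ℂ => (U (z.re, z.im) : ℂ) + V (z.re, z.im) * Complex.I) := by
  intro z
  set φ : ℂ →L[ℝ] ℝ × ℝ := Complex.reCLM.prod Complex.imCLM with hφdef
  have hφ : ∀ w : ℂ, φ w = (w.re, w.im) := fun w => rfl
  set q : ℝ × ℝ := (z.re, z.im) with hq
  set DU := fderiv ℝ U q with hDU
  set DV := fderiv ℝ V q with hDV
  set p := DU (1,0) with hp
  set r := DV (1,0) with hr
  have hre : HasFDerivAt (fun z : ℂ => (U (φ z) : ℂ))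
      (Complex.ofRealCLM.comp (DU.comp φ)) z :=
    Complex.ofRealCLM.hasFDerivAt.comp z (((hU q).hasFDerivAt).comp z (φ.hasFDerivAt))
  have him : HasFDerivAt (fun z : ℂ => (V (φ z) : ℂ) * Complex.I)
      (Complex.I • Complex.ofRealCLM.comp (DV.comp φ)) z :=
    (Complex.ofRealCLM.hasFDerivAt.comp z (((hV q).hasFDerivAt).comp z (φ.hasFDerivAt))).mul_const _
  have hF : HasFDerivAt (fun z : ℂ => (U (z.re, z.im) : ℂ) + V (z.re, z.im) * Complex.I)
      (Complex.ofRealCLM.comp (DU.comp φ) + Complex.I • Complex.ofRealCLM.comp (DV.comp φ)) z :=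
    hre.add him
  have key : HasFDerivAt (fun z : ℂ => (U (z.re, z.im) : ℂ) + V (z.re, z.im) * Complex.I)
      (((p : ℂ) + r * Complex.I) • (1 : ℂ →L[ℂ] ℂ)) z := by
    apply hasFDerivAt_of_restrictScalars ℝ hF
    ext h
    have hcoord : ((h.re, h.im) : ℝ × ℝ) = h.re • ((1:ℝ),(0:ℝ)) + h.im • ((0:ℝ),(1:ℝ)) := by
      simp [Prod.ext_iff]
    have hDUh : DU (h.re, h.im) = h.re * p - h.im * r := by
      rw [hcoord, map_add, map_smul, map_smul, h2 q, smul_eq_mul, smul_eq_mul]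
      rw [← hp, ← hDV, ← hr]; ring
    have hDVh : DV (h.re, h.im) = h.re * r + h.im * p := by
      rw [hcoord, map_add, map_smul, map_smul, ← h1 q, smul_eq_mul, smul_eq_mul]
      try rw [← hr, ← hDU, ← hp]
      try ring
    simp only [ContinuousLinearMap.coe_restrictScalars', ContinuousLinearMap.smul_apply,
      ContinuousLinearMap.one_apply, ContinuousLinearMap.add_apply,
      ContinuousLinearMap.coe_comp', Function.comp_apply, ContinuousLinearMap.smulRight_apply,
      Complex.ofRealCLM_apply, smul_eq_mul, hφ, hDUh, hDVh]
    apply Complex.ext <;>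
      simp [Complex.mul_re, Complex.mul_im, Complex.add_re, Complex.add_im] <;> ring
  exact key.differentiableAt

lemma periodic_zsmul {α β : Type*} [AddCommGroup α] (f : α → β) (γ : α)
    (h : ∀ q, f (q + γ) = f q) (n : ℤ) (q : α) : f (q + n • γ) = f q := by
  induction n using Int.induction_on with
  | zero => simp
  | succ k ih => rw [add_smul, one_smul, ← add_assoc, h, ih]
  | pred k ih =>
    have h' : ∀ q, f (q - γ) = f q := fun q => by
      rw [← h (q - γ), sub_add_cancel]
    rw [sub_smul, one_smul, sub_eq_add_neg (-(k:ℤ) • γ) γ, ← add_assoc, ← sub_eq_add_neg, h', ih]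

lemma bounded_of_periodic (γ₁ γ₂ : ℝ × ℝ) (hind : LinearIndependent ℝ ![γ₁, γ₂])
    (G : ℝ × ℝ → ℂ) (hG : Continuous G)
    (h1 : ∀ q, G (q + γ₁) = G q) (h2 : ∀ q, G (q + γ₂) = G q) :
    Bornology.IsBounded (Set.range G) := by
  have hcard : Fintype.card (Fin 2) = Module.finrank ℝ (ℝ × ℝ) := by simp
  let B := basisOfLinearIndependentOfCardEqFinrank hind hcard
  have hB : ∀ i, B i = ![γ₁, γ₂] i := fun i => by
    rw [coe_basisOfLinearIndependentOfCardEqFinrank]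
  let K : Set (ℝ × ℝ) := (fun st : ℝ × ℝ => st.1 • γ₁ + st.2 • γ₂) '' (Set.Icc 0 1)
  have hKc : IsCompact K :=
    (isCompact_Icc).image ((continuous_fst.smul continuous_const).add
      (continuous_snd.smul continuous_const))
  have hsub : Set.range G ⊆ G '' K := by
    rintro - ⟨q, rfl⟩
    set s := B.repr q 0 with hs
    set t := B.repr q 1 with ht
    have hqrepr : q = s • γ₁ + t • γ₂ := by
      have := B.sum_repr q
      rw [Fin.sum_univ_two, hB 0, hB 1] at this
      simpa using this.symm
    refine ⟨Int.fract s • γ₁ + Int.fract t • γ₂, ⟨(Int.fract s, Int.fract t),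
      ⟨⟨(Int.fract_nonneg s), (Int.fract_nonneg t)⟩,
        ⟨(Int.fract_lt_one s).le, (Int.fract_lt_one t).le⟩⟩, rfl⟩, ?_⟩
    have hq' : q = (Int.fract s • γ₁ + Int.fract t • γ₂) + ⌊s⌋ • γ₁ + ⌊t⌋ • γ₂ := by
      conv_lhs => rw [hqrepr, ← Int.fract_add_floor s, ← Int.fract_add_floor t]
      rw [add_smul, add_smul, Int.cast_smul_eq_zsmul, Int.cast_smul_eq_zsmul]
      abel
    conv_rhs => rw [hq']
    rw [periodic_zsmul G γ₂ h2, periodic_zsmul G γ₁ h1]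
  exact ((hKc.image hG).isBounded).subset hsub

/-- Partial derivative in `x` of a function on the plane. -/
noncomputable def pdx (f : ℝ × ℝ → ℝ) (q : ℝ × ℝ) : ℝ := fderiv ℝ f q (1, 0)

/-- Partial derivative in `y` of a function on the plane. -/
noncomputable def pdy (f : ℝ × ℝ → ℝ) (q : ℝ × ℝ) : ℝ := fderiv ℝ f q (0, 1)

/-- On the torus `T² = ℝ²/Γ` (encoded by `Γ`-periodicity with respect to two linearly
independent periods `γ₁, γ₂`) with metric `e^{2μ}(dx²+dy²)` in global isothermal
coordinates, the kernel of `pd` on trace-free symmetric rank `m` tensor fields — i.e. the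
Cauchy–Riemann system for the components `a = f_{1…1}`, `b = f_{1…12}` — consists exactly
of the two-parameter family `a = e^{2mμ} c¹`, `b = e^{2mμ} c²` with constants `c¹, c²`. -/
theorem stmt_8 (γ₁ γ₂ : ℝ × ℝ) (hind : LinearIndependent ℝ ![γ₁, γ₂])
    (μ a b : ℝ × ℝ → ℝ)
    (hμ : ContDiff ℝ (⊤ : ℕ∞) μ) (ha : ContDiff ℝ (⊤ : ℕ∞) a) (hb : ContDiff ℝ (⊤ : ℕ∞) b)
    (hμp : ∀ q, μ (q + γ₁) = μ q ∧ μ (q + γ₂) = μ q)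
    (hap : ∀ q, a (q + γ₁) = a q ∧ a (q + γ₂) = a q)
    (hbp : ∀ q, b (q + γ₁) = b q ∧ b (q + γ₂) = b q)
    (m : ℕ) :
    (∀ q : ℝ × ℝ,
        pdx (fun q' => Real.exp (-(2 * (m : ℝ)) * μ q') * a q') q
          - pdy (fun q' => Real.exp (-(2 * (m : ℝ)) * μ q') * b q') q = 0 ∧
        pdy (fun q' => Real.exp (-(2 * (m : ℝ)) * μ q') * a q') q
          + pdx (fun q' => Real.exp (-(2 * (m : ℝ)) * μ q') * b q') q = 0) ↔
    (∃ c₁ c₂ : ℝ, ∀ q : ℝ × ℝ,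
        a q = Real.exp (2 * (m : ℝ) * μ q) * c₁ ∧
        b q = Real.exp (2 * (m : ℝ) * μ q) * c₂) := by
  have hexp1 : ∀ q, Real.exp (2 * (m : ℝ) * μ q) * Real.exp (-(2 * (m : ℝ)) * μ q) = 1 := by
    intro q
    rw [← Real.exp_add, show 2 * (m : ℝ) * μ q + -(2 * (m : ℝ)) * μ q = 0 by ring, Real.exp_zero]
  constructor
  · intro h
    set U : ℝ × ℝ → ℝ := fun q' => Real.exp (-(2 * (m : ℝ)) * μ q') * a q' with hUdef
    set V : ℝ × ℝ → ℝ := fun q' => Real.exp (-(2 * (m : ℝ)) * μ q') * b q' with hVdef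
    have hexpc : ContDiff ℝ (⊤ : ℕ∞) (fun q' => Real.exp (-(2 * (m : ℝ)) * μ q')) :=
      Real.contDiff_exp.comp (contDiff_const.mul hμ)
    have hUd : Differentiable ℝ U := (hexpc.mul ha).differentiable (by simp)
    have hVd : Differentiable ℝ V := (hexpc.mul hb).differentiable (by simp)
    have h1 : ∀ q, fderiv ℝ U q (1,0) = fderiv ℝ V q (0,1) := fun q => by
      have := (h q).1; rw [sub_eq_zero] at this; exact this
    have h2 : ∀ q, fderiv ℝ U q (0,1) = - fderiv ℝ V q (1,0) := fun q => by
      have := (h q).2; simp only [pdx, pdy] at this; linarith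
    have hholo := holo_of_CR U V hUd hVd h1 h2
    set G : ℝ × ℝ → ℂ := fun q => (U q : ℂ) + V q * Complex.I with hGdef
    have hUp1 : ∀ q, U (q + γ₁) = U q := fun q => by
      simp only [hUdef, (hμp q).1, (hap q).1]
    have hUp2 : ∀ q, U (q + γ₂) = U q := fun q => by
      simp only [hUdef, (hμp q).2, (hap q).2]
    have hVp1 : ∀ q, V (q + γ₁) = V q := fun q => by
      simp only [hVdef, (hμp q).1, (hbp q).1]
    have hVp2 : ∀ q, V (q + γ₂) = V q := fun q => by
      simp only [hVdef, (hμp q).2, (hbp q).2]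
    have hGc : Continuous G :=
      (Complex.continuous_ofReal.comp (hexpc.mul ha).continuous).add
        ((Complex.continuous_ofReal.comp (hexpc.mul hb).continuous).mul continuous_const)
    have hGp1 : ∀ q, G (q + γ₁) = G q := fun q => by simp only [hGdef, hUp1, hVp1]
    have hGp2 : ∀ q, G (q + γ₂) = G q := fun q => by simp only [hGdef, hUp2, hVp2]
    have hbdd := bounded_of_periodic γ₁ γ₂ hind G hGc hGp1 hGp2
    have hFb : Bornology.IsBounded
        (Set.range (fun z : ℂ => (U (z.re, z.im) : ℂ) + V (z.re, z.im) * Complex.I)) := by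
      apply hbdd.subset
      rintro - ⟨z, rfl⟩
      exact ⟨(z.re, z.im), rfl⟩
    have hconst : ∀ q : ℝ × ℝ, G q = G 0 := fun q =>
      hholo.apply_eq_apply_of_bounded hFb ⟨q.1, q.2⟩ 0
    have hUVc : ∀ q, U q = U 0 ∧ V q = V 0 := by
      intro q
      have := hconst q
      rw [hGdef, Complex.ext_iff] at this
      simpa using this
    refine ⟨U 0, V 0, fun q => ⟨?_, ?_⟩⟩
    · have hu : Real.exp (-(2 * (m : ℝ)) * μ q) * a q = U 0 := (hUVc q).1
      have hh : a q = Real.exp (2 * (m : ℝ) * μ q) * (Real.exp (-(2 * (m : ℝ)) * μ q) * a q) := by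
        rw [← mul_assoc, hexp1, one_mul]
      rw [hh, hu]
    · have hv : Real.exp (-(2 * (m : ℝ)) * μ q) * b q = V 0 := (hUVc q).2
      have hh : b q = Real.exp (2 * (m : ℝ) * μ q) * (Real.exp (-(2 * (m : ℝ)) * μ q) * b q) := by
        rw [← mul_assoc, hexp1, one_mul]
      rw [hh, hv]
  · rintro ⟨c₁, c₂, hc⟩ q
    have hU : (fun q' => Real.exp (-(2 * (m : ℝ) * μ q')) * a q') = fun _ => c₁ := by
      funext q'
      rw [(hc q').1, ← mul_assoc, ← Real.exp_add,
        show -(2 * (m : ℝ) * μ q') + 2 * (m : ℝ) * μ q' = 0 by ring, Real.exp_zero, one_mul]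
    have hV : (fun q' => Real.exp (-(2 * (m : ℝ) * μ q')) * b q') = fun _ => c₂ := by
      funext q'
      rw [(hc q').2, ← mul_assoc, ← Real.exp_add,
        show -(2 * (m : ℝ) * μ q') + 2 * (m : ℝ) * μ q' = 0 by ring, Real.exp_zero, one_mul]
    constructor <;> simp [pdx, pdy, hU, hV]
end

section
/- Let f be a trace-free symmetric rank m ≥ 1 tensor field on a surface with metric e^{2μ}(dx²+dy²) in isothermal coordinates. Then the divergence of f satisfies the simple formulas (δf)_{1…1} = e^{-2μ}(∂_x f_{1…1} + ∂_y f_{1…12}) and (δf)_{1…12} = e^{-2μ}(−∂_y f_{1…1} + ∂_x f_{1…12}); in particular all Christoffel-symbol correction terms cancel. -/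
open scoped BigOperators

/-- Partial derivative `∂_p` (`p = 0 ↦ ∂ₓ`, `p = 1 ↦ ∂_y`) of a function on the plane. -/
noncomputable def pder (p : Fin 2) (f : ℝ × ℝ → ℝ) (q : ℝ × ℝ) : ℝ :=
  fderiv ℝ f q (if p = 0 then ((1 : ℝ), (0 : ℝ)) else (0, 1))

/-- Christoffel symbols `Γ^r_{p i}` of the metric `e^{2μ}(dx² + dy²)`:
`Γ¹₁₁ = μₓ, Γ¹₁₂ = μ_y, Γ¹₂₂ = -μₓ, Γ²₁₁ = -μ_y, Γ²₁₂ = μₓ, Γ²₂₂ = μ_y`. -/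
noncomputable def chr (μ : ℝ × ℝ → ℝ) (p i r : Fin 2) (q : ℝ × ℝ) : ℝ :=
  if r = 0 then
    (if p = i then (if p = 0 then pder 0 μ q else -(pder 0 μ q)) else pder 1 μ q)
  else
    (if p = i then (if p = 0 then -(pder 1 μ q) else pder 1 μ q) else pder 0 μ q)

/-- The components of the trace-free symmetric tensor field determined by
`a = f_{1…1}` and `b = f_{1…12}`: on a multi-index `w` containing `k` twos the component
equals `(-1)^{⌊k/2⌋} a` for even `k` and `(-1)^{⌊k/2⌋} b` for odd `k`
(this encodes trace-freeness `f_{…22} = -f_{…}`). -/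
noncomputable def tfComp (a b : ℝ × ℝ → ℝ) {N : ℕ} (w : Fin N → Fin 2) (q : ℝ × ℝ) : ℝ :=
  ((-1 : ℝ) ^ ((∑ j, ((w j : ℕ))) / 2)) *
    (if (∑ j, ((w j : ℕ))) % 2 = 0 then a q else b q)

/-- Covariant derivative `∇_p F_w` of a rank `N` symmetric tensor field with components
`F` with respect to the Levi-Civita connection of `e^{2μ}(dx²+dy²)`. -/
noncomputable def covDer (μ : ℝ × ℝ → ℝ) {N : ℕ} (F : (Fin N → Fin 2) → ℝ × ℝ → ℝ)
    (p : Fin 2) (w : Fin N → Fin 2) (q : ℝ × ℝ) : ℝ :=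
  pder p (F w) q -
    ∑ j : Fin N, ∑ r : Fin 2, chr μ p (w j) r q * F (Function.update w j r) q

/-- Component `(δ f)_w = g^{pq} ∇_p f_{q w}` of the divergence of the trace-free rank
`N+1` tensor field with components `tfComp a b`. -/
noncomputable def divComp (μ a b : ℝ × ℝ → ℝ) {N : ℕ} (w : Fin N → Fin 2)
    (q : ℝ × ℝ) : ℝ :=
  Real.exp (-(2 : ℝ) * μ q) *
    (covDer μ (tfComp a b) 0 (Fin.cons 0 w) q + covDer μ (tfComp a b) 1 (Fin.cons 1 w) q)

lemma fin2_cases (x : Fin 2) : x = 0 ∨ x = 1 := by omega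

lemma sum_update_nat {N : ℕ} (w : Fin N → Fin 2) (j : Fin N) (r : Fin 2) :
    ∑ i, ((Function.update w j r) i : ℕ) = (r : ℕ) + (∑ i, ((w i : ℕ)) - ((w j : ℕ))) := by
  classical
  have h1 : ∀ i : Fin N, ((Function.update w j r) i : ℕ)
      = Function.update (fun i => ((w i : ℕ))) j ((r : ℕ)) i := by
    intro i; by_cases h : i = j <;> simp [Function.update, h]
  rw [Finset.sum_congr rfl (fun i _ => h1 i),
    Finset.sum_update_of_mem (Finset.mem_univ j)]
  have h2 : ((w j : ℕ)) + ∑ i ∈ Finset.univ.erase j, ((w i : ℕ)) = ∑ i, ((w i : ℕ)) :=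
    Finset.add_sum_erase Finset.univ (fun i => ((w i : ℕ))) (Finset.mem_univ j)
  rw [Finset.sdiff_singleton_eq_erase]
  omega

lemma tfComp_eq (a b : ℝ × ℝ → ℝ) {N : ℕ} (w : Fin N → Fin 2) (S : ℕ)
    (h : ∑ i, ((w i : ℕ)) = S) (q : ℝ × ℝ) :
    tfComp a b w q = ((-1 : ℝ) ^ (S / 2)) * (if S % 2 = 0 then a q else b q) := by
  unfold tfComp; rw [h]

lemma innerSumTF (μ a b : ℝ × ℝ → ℝ) {N : ℕ} (v : Fin N → Fin 2) (j : Fin N)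
    (q : ℝ × ℝ) (p e : Fin 2) (S : ℕ) (hS : ∑ i, ((v i : ℕ)) = S) (he : v j = e) :
    ∑ r : Fin 2, chr μ p (v j) r q * tfComp a b (Function.update v j r) q
      = chr μ p e 0 q *
          (((-1 : ℝ) ^ ((S - (e : ℕ)) / 2)) * (if (S - (e : ℕ)) % 2 = 0 then a q else b q))
        + chr μ p e 1 q *
          (((-1 : ℝ) ^ ((1 + (S - (e : ℕ))) / 2)) *
            (if (1 + (S - (e : ℕ))) % 2 = 0 then a q else b q)) := by
  have h0 : ∑ i, ((Function.update v j (0 : Fin 2)) i : ℕ) = S - (e : ℕ) := by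
    rw [sum_update_nat, hS, he]; simp
  have h1 : ∑ i, ((Function.update v j (1 : Fin 2)) i : ℕ) = 1 + (S - (e : ℕ)) := by
    rw [sum_update_nat, hS, he]; simp
  rw [Fin.sum_univ_two, he, tfComp_eq a b _ _ h0 q, tfComp_eq a b _ _ h1 q]

lemma covDer_eq (μ a b : ℝ × ℝ → ℝ) (q : ℝ × ℝ) {N : ℕ} (v : Fin N → Fin 2) (p : Fin 2)
    (S : ℕ) (hS : ∑ i, ((v i : ℕ)) = S) (C : ℝ)
    (hC : ∀ j : Fin N,
      (∑ r : Fin 2, chr μ p (v j) r q * tfComp a b (Function.update v j r) q) = C) :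
    covDer μ (tfComp a b) p v q
      = pder p (fun q' => ((-1 : ℝ) ^ (S / 2)) * (if S % 2 = 0 then a q' else b q')) q
        - (N : ℝ) * C := by
  unfold covDer
  rw [Finset.sum_congr rfl (fun j _ => hC j), Finset.sum_const, Finset.card_univ,
    Fintype.card_fin, nsmul_eq_mul]
  congr 2
  funext q'
  exact tfComp_eq a b v S hS q'

/-- For a trace-free symmetric rank `m+2` tensor field `f` on a surface with metric
`e^{2μ}(dx²+dy²)` in isothermal coordinates, with `a = f_{1…1}`, `b = f_{1…12}`, the
divergence satisfies the simple formulas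
`(δf)_{1…1} = e^{-2μ}(∂ₓ a + ∂_y b)` and `(δf)_{1…12} = e^{-2μ}(-∂_y a + ∂ₓ b)`:
all Christoffel-symbol correction terms cancel. -/
theorem stmt_10 (μ a b : ℝ × ℝ → ℝ) (hμ : ContDiff ℝ (⊤ : ℕ∞) μ) (ha : ContDiff ℝ (⊤ : ℕ∞) a)
    (hb : ContDiff ℝ (⊤ : ℕ∞) b) (m : ℕ) :
    ∀ q : ℝ × ℝ,
      divComp μ a b (fun _ : Fin (m + 1) => 0) q
        = Real.exp (-(2 : ℝ) * μ q) * (pder 0 a q + pder 1 b q) ∧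
      divComp μ a b (Fin.snoc (fun _ : Fin m => (0 : Fin 2)) 1) q
        = Real.exp (-(2 : ℝ) * μ q) * (-(pder 1 a q) + pder 0 b q) := by

  intro q
  have e0 : (fun q' => ((-1 : ℝ) ^ ((0 : ℕ) / 2)) * (if (0 : ℕ) % 2 = 0 then a q' else b q'))
      = a := by funext q'; norm_num
  have e1 : (fun q' => ((-1 : ℝ) ^ ((1 : ℕ) / 2)) * (if (1 : ℕ) % 2 = 0 then a q' else b q'))
      = b := by funext q'; norm_num
  have e2 : pder 1 (fun q' => ((-1 : ℝ) ^ ((2 : ℕ) / 2)) *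
      (if (2 : ℕ) % 2 = 0 then a q' else b q')) q = -(pder 1 a q) := by
    have hfn : (fun q' => ((-1 : ℝ) ^ ((2 : ℕ) / 2)) *
        (if (2 : ℕ) % 2 = 0 then a q' else b q')) = fun q' => -(a q') := by
      funext q'; norm_num
    rw [hfn]
    simp only [pder, fderiv_fun_neg, ContinuousLinearMap.neg_apply]
  constructor
  · -- first component
    have hS1 : ∑ i, (((Fin.cons 0 (fun _ : Fin (m + 1) => (0 : Fin 2)) : Fin (m + 2) → Fin 2) i : ℕ)) = 0 := by
      rw [Fin.sum_univ_succ]; simp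
    have hS2 : ∑ i, (((Fin.cons 1 (fun _ : Fin (m + 1) => (0 : Fin 2)) : Fin (m + 2) → Fin 2) i : ℕ)) = 1 := by
      rw [Fin.sum_univ_succ]; simp
    have hv1 : ∀ j, (Fin.cons 0 (fun _ : Fin (m + 1) => (0 : Fin 2)) : Fin (m + 2) → Fin 2) j = 0 := by
      intro j; refine Fin.cases ?_ ?_ j <;> simp
    have hc1 : ∀ j : Fin (m + 2),
        (∑ r : Fin 2, chr μ 0 (((Fin.cons 0 (fun _ : Fin (m + 1) => (0 : Fin 2)) : Fin (m + 2) → Fin 2)) j) r q *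
          tfComp a b (Function.update ((Fin.cons 0 (fun _ : Fin (m + 1) => (0 : Fin 2)) : Fin (m + 2) → Fin 2)) j r) q)
        = pder 0 μ q * a q - pder 1 μ q * b q := by
      intro j
      rw [innerSumTF μ a b _ j q 0 0 0 hS1 (hv1 j)]
      norm_num [chr]
      ring
    have hc2 : ∀ j : Fin (m + 2),
        (∑ r : Fin 2, chr μ 1 (((Fin.cons 1 (fun _ : Fin (m + 1) => (0 : Fin 2)) : Fin (m + 2) → Fin 2)) j) r q *
          tfComp a b (Function.update ((Fin.cons 1 (fun _ : Fin (m + 1) => (0 : Fin 2)) : Fin (m + 2) → Fin 2)) j r) q)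
        = pder 1 μ q * b q - pder 0 μ q * a q := by
      intro j
      rcases fin2_cases ((Fin.cons 1 (fun _ : Fin (m + 1) => (0 : Fin 2)) : Fin (m + 2) → Fin 2) j) with h | h
      · rw [innerSumTF μ a b _ j q 1 0 1 hS2 h]; norm_num [chr]; try ring
      · rw [innerSumTF μ a b _ j q 1 1 1 hS2 h]; norm_num [chr]; try ring
    unfold divComp
    rw [covDer_eq μ a b q _ 0 0 hS1 _ hc1, covDer_eq μ a b q _ 1 1 hS2 _ hc2, e0, e1]
    ring
  · -- second component
    have hSw : ∑ i, (((Fin.snoc (fun _ : Fin m => (0 : Fin 2)) (1 : Fin 2) : Fin (m + 1) → Fin 2) i : ℕ)) = 1 := by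
      rw [Fin.sum_univ_castSucc]; simp
    have hS3 : ∑ i, (((Fin.cons 0 (Fin.snoc (fun _ : Fin m => (0 : Fin 2)) 1) : Fin (m + 2) → Fin 2) i : ℕ))
        = 1 := by
      rw [Fin.sum_univ_succ]; simp only [Fin.cons_succ, Fin.cons_zero]; rw [hSw]; norm_num
    have hS4 : ∑ i, (((Fin.cons 1 (Fin.snoc (fun _ : Fin m => (0 : Fin 2)) 1) : Fin (m + 2) → Fin 2) i : ℕ))
        = 2 := by
      rw [Fin.sum_univ_succ]; simp only [Fin.cons_succ, Fin.cons_zero]; rw [hSw]; norm_num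
    have hc3 : ∀ j : Fin (m + 2),
        (∑ r : Fin 2, chr μ 0 (((Fin.cons 0 (Fin.snoc (fun _ : Fin m => (0 : Fin 2)) 1) : Fin (m + 2) → Fin 2)) j) r q *
          tfComp a b
            (Function.update ((Fin.cons 0 (Fin.snoc (fun _ : Fin m => (0 : Fin 2)) 1) : Fin (m + 2) → Fin 2)) j r) q)
        = pder 0 μ q * b q + pder 1 μ q * a q := by
      intro j
      rcases fin2_cases ((Fin.cons 0 (Fin.snoc (fun _ : Fin m => (0 : Fin 2)) 1) : Fin (m + 2) → Fin 2) j) with h | h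
      · rw [innerSumTF μ a b _ j q 0 0 1 hS3 h]; norm_num [chr]; try ring
      · rw [innerSumTF μ a b _ j q 0 1 1 hS3 h]; norm_num [chr]; try ring
    have hc4 : ∀ j : Fin (m + 2),
        (∑ r : Fin 2, chr μ 1 (((Fin.cons 1 (Fin.snoc (fun _ : Fin m => (0 : Fin 2)) 1) : Fin (m + 2) → Fin 2)) j) r q *
          tfComp a b
            (Function.update ((Fin.cons 1 (Fin.snoc (fun _ : Fin m => (0 : Fin 2)) 1) : Fin (m + 2) → Fin 2)) j r) q)
        = -(pder 0 μ q * b q) - pder 1 μ q * a q := by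
      intro j
      rcases fin2_cases ((Fin.cons 1 (Fin.snoc (fun _ : Fin m => (0 : Fin 2)) 1) : Fin (m + 2) → Fin 2) j) with h | h
      · rw [innerSumTF μ a b _ j q 1 0 2 hS4 h]; norm_num [chr]; try ring
      · rw [innerSumTF μ a b _ j q 1 1 2 hS4 h]; norm_num [chr]; try ring
    unfold divComp
    rw [covDer_eq μ a b q _ 0 1 hS3 _ hc3, covDer_eq μ a b q _ 1 2 hS4 _ hc4, e1, e2]
    ring
end

section
/- If a 2D Riemannian torus T² = ℝ²/Γ with metric e^{2μ}(dx²+dy²) admits a nonzero Killing vector field, then c¹μ_x + c²μ_y = 0 for some constant vector (c¹,c²) ≠ 0; equivalently, after a suitable linear change of global isothermal coordinates, μ depends only on y. -/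
lemma aux_gderiv (μ f : ℝ × ℝ → ℝ) (hμ : ContDiff ℝ (⊤ : ℕ∞) μ) (hf : ContDiff ℝ (⊤ : ℕ∞) f) (q : ℝ × ℝ) :
    HasFDerivAt (fun p => f p * Real.exp (-(2 * μ p)))
      (Real.exp (-(2 * μ q)) • (fderiv ℝ f q - (2 * f q) • fderiv ℝ μ q)) q := by
  have hfd := (hf.differentiable (by simp) q).hasFDerivAt
  have hμd := (hμ.differentiable (by simp) q).hasFDerivAt
  have heq : (fun p => -(2 * μ p)) = fun p => (-2 : ℝ) • μ p := by
    funext p; simp [smul_eq_mul]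
  have hinner : HasFDerivAt (fun p => -(2 * μ p)) ((-2 : ℝ) • fderiv ℝ μ q) q := by
    rw [heq]; exact hμd.const_smul (-2 : ℝ)
  have hexp : HasFDerivAt (fun p => Real.exp (-(2 * μ p)))
      (Real.exp (-(2 * μ q)) • ((-2 : ℝ) • fderiv ℝ μ q)) q :=
    by have := (Real.hasDerivAt_exp (-(2 * μ q))).comp_hasFDerivAt q hinner; exact this
  have h := hfd.mul hexp
  have hCLM : Real.exp (-(2 * μ q)) • (fderiv ℝ f q - (2 * f q) • fderiv ℝ μ q)
      = f q • Real.exp (-(2 * μ q)) • (-2 : ℝ) • fderiv ℝ μ q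
        + Real.exp (-(2 * μ q)) • fderiv ℝ f q := by
    apply ContinuousLinearMap.ext; intro v
    simp [smul_eq_mul]
    ring
  rw [hCLM]
  exact h

lemma aux_gderiv_apply (μ f : ℝ × ℝ → ℝ) (hμ : ContDiff ℝ (⊤ : ℕ∞) μ) (hf : ContDiff ℝ (⊤ : ℕ∞) f) (q : ℝ × ℝ)
    (v : ℝ × ℝ) :
    fderiv ℝ (fun p => f p * Real.exp (-(2 * μ p))) q v
      = Real.exp (-(2 * μ q)) * (fderiv ℝ f q v - 2 * f q * fderiv ℝ μ q v) := by
  rw [(aux_gderiv μ f hμ hf q).fderiv]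
  simp [smul_eq_mul]

lemma aux_zper (g : ℝ × ℝ → ℝ) (γ : ℝ × ℝ) (h : ∀ q, g (q + γ) = g q) (n : ℤ) (q : ℝ × ℝ) :
    g (q + n • γ) = g q := by
  induction n using Int.induction_on with
  | zero => simp
  | succ k ih =>
    have e : q + ((k : ℤ) + 1) • γ = (q + (k : ℤ) • γ) + γ := by
      rw [add_smul, one_smul, add_assoc]
    rw [e, h, ih]
  | pred k ih =>
    have e : (q + (-(k : ℤ) - 1) • γ) + γ = q + (-(k : ℤ)) • γ := by
      rw [add_assoc, sub_smul, one_smul, sub_add_cancel]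
    have := h (q + (-(k : ℤ) - 1) • γ)
    rw [e, ih] at this
    exact this.symm

/-- If the Riemannian torus `ℝ²/Γ` with metric `e^{2μ}(dx²+dy²)` in global isothermal
coordinates admits a nonzero Killing (co)vector field `f = (f₁,f₂)` (the Killing
equations written out with the Christoffel symbols of the metric), then
`c¹ μₓ + c² μ_y = 0` on the torus for some constant vector `(c¹,c²) ≠ 0`. -/
theorem stmt_14 (γ₁ γ₂ : ℝ × ℝ) (hind : LinearIndependent ℝ ![γ₁, γ₂])
    (μ f₁ f₂ : ℝ × ℝ → ℝ)
    (hμ : ContDiff ℝ (⊤ : ℕ∞) μ) (hf₁ : ContDiff ℝ (⊤ : ℕ∞) f₁) (hf₂ : ContDiff ℝ (⊤ : ℕ∞) f₂)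
    (hμp : ∀ q, μ (q + γ₁) = μ q ∧ μ (q + γ₂) = μ q)
    (hf₁p : ∀ q, f₁ (q + γ₁) = f₁ q ∧ f₁ (q + γ₂) = f₁ q)
    (hf₂p : ∀ q, f₂ (q + γ₁) = f₂ q ∧ f₂ (q + γ₂) = f₂ q)
    (hnz : ∃ q, f₁ q ≠ 0 ∨ f₂ q ≠ 0)
    (hK11 : ∀ q, pdx f₁ q - pdx μ q * f₁ q + pdy μ q * f₂ q = 0)
    (hK12 : ∀ q, pdx f₂ q + pdy f₁ q - 2 * pdy μ q * f₁ q - 2 * pdx μ q * f₂ q = 0)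
    (hK22 : ∀ q, pdy f₂ q + pdx μ q * f₁ q - pdy μ q * f₂ q = 0) :
    ∃ c : ℝ × ℝ, c ≠ 0 ∧ ∀ q, c.1 * pdx μ q + c.2 * pdy μ q = 0 := by
  classical
  simp only [pdx, pdy] at hK11 hK12 hK22 ⊢
  set g₁ : ℝ × ℝ → ℝ := fun p => f₁ p * Real.exp (-(2 * μ p)) with hg₁def
  set g₂ : ℝ × ℝ → ℝ := fun p => f₂ p * Real.exp (-(2 * μ p)) with hg₂def
  have hval₁ : ∀ q v, fderiv ℝ g₁ q v
      = Real.exp (-(2 * μ q)) * (fderiv ℝ f₁ q v - 2 * f₁ q * fderiv ℝ μ q v) :=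
    fun q v => aux_gderiv_apply μ f₁ hμ hf₁ q v
  have hval₂ : ∀ q v, fderiv ℝ g₂ q v
      = Real.exp (-(2 * μ q)) * (fderiv ℝ f₂ q v - 2 * f₂ q * fderiv ℝ μ q v) :=
    fun q v => aux_gderiv_apply μ f₂ hμ hf₂ q v
  -- Cauchy–Riemann equations for (g₁, g₂)
  have hCR1 : ∀ q, fderiv ℝ g₁ q (1, 0) = fderiv ℝ g₂ q (0, 1) := by
    intro q
    rw [hval₁, hval₂]
    linear_combination Real.exp (-(2 * μ q)) * hK11 q - Real.exp (-(2 * μ q)) * hK22 q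
  have hCR2 : ∀ q, fderiv ℝ g₁ q (0, 1) = - fderiv ℝ g₂ q (1, 0) := by
    intro q
    rw [hval₁, hval₂]
    linear_combination Real.exp (-(2 * μ q)) * hK12 q
  -- the complex function φ = g₁ + i g₂ read through ℂ ≃ ℝ × ℝ
  set φ : ℂ → ℂ := fun z =>
    Complex.equivRealProdCLM.symm (g₁ (Complex.equivRealProdCLM z),
      g₂ (Complex.equivRealProdCLM z)) with hφdef
  have hφdiff : Differentiable ℂ φ := by
    intro z
    set p : ℝ × ℝ := Complex.equivRealProdCLM z with hpdef
    set A₁ := fderiv ℝ g₁ p with hA₁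
    set A₂ := fderiv ℝ g₂ p with hA₂
    have hg₁d : HasFDerivAt g₁ A₁ p := (aux_gderiv μ f₁ hμ hf₁ p).differentiableAt.hasFDerivAt
    have hg₂d : HasFDerivAt g₂ A₂ p := (aux_gderiv μ f₂ hμ hf₂ p).differentiableAt.hasFDerivAt
    have hprod : HasFDerivAt (fun r : ℝ × ℝ => (g₁ r, g₂ r)) (A₁.prod A₂) p := HasFDerivAt.prodMk hg₁d hg₂d
    have hEz : HasFDerivAt (⇑Complex.equivRealProdCLM)
        (Complex.equivRealProdCLM : ℂ →L[ℝ] ℝ × ℝ) z :=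
      Complex.equivRealProdCLM.hasFDerivAt
    have hcomp1 : HasFDerivAt
        (fun z : ℂ => (g₁ (Complex.equivRealProdCLM z), g₂ (Complex.equivRealProdCLM z)))
        ((A₁.prod A₂).comp (Complex.equivRealProdCLM : ℂ →L[ℝ] ℝ × ℝ)) z :=
      hprod.comp z hEz
    have hL : HasFDerivAt φ
        ((Complex.equivRealProdCLM.symm : ℝ × ℝ →L[ℝ] ℂ).comp
          ((A₁.prod A₂).comp (Complex.equivRealProdCLM : ℂ →L[ℝ] ℝ × ℝ))) z :=
      (Complex.equivRealProdCLM.symm.hasFDerivAt).comp z hcomp1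
    set c : ℂ := (A₁ (1, 0) : ℝ) + (A₂ (1, 0) : ℝ) * Complex.I with hcdef
    have hM : HasFDerivAt φ (c • (1 : ℂ →L[ℂ] ℂ)) z := by
      apply hasFDerivAt_of_restrictScalars ℝ hL
      apply ContinuousLinearMap.ext
      intro w
      have hw0 : (Complex.equivRealProdCLM w : ℝ × ℝ) = (w.re, w.im) := rfl
      have hw : (Complex.equivRealProdCLM w : ℝ × ℝ)
          = w.re • ((1 : ℝ), (0 : ℝ)) + w.im • ((0 : ℝ), (1 : ℝ)) := by
        rw [hw0]; simp [Prod.ext_iff]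
      have h1 : A₁ (Complex.equivRealProdCLM w)
          = w.re * A₁ (1, 0) + w.im * A₁ (0, 1) := by
        rw [hw, map_add, map_smul, map_smul, smul_eq_mul, smul_eq_mul]
      have h2 : A₂ (Complex.equivRealProdCLM w)
          = w.re * A₂ (1, 0) + w.im * A₂ (0, 1) := by
        rw [hw, map_add, map_smul, map_smul, smul_eq_mul, smul_eq_mul]
      have hcr1 := hCR1 p
      have hcr2 := hCR2 p
      rw [← hA₁, ← hA₂] at hcr1 hcr2
      rw [hcr2] at h1
      rw [← hcr1] at h2
      simp only [ContinuousLinearMap.coe_restrictScalars', ContinuousLinearMap.smul_apply,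
        ContinuousLinearMap.one_apply, ContinuousLinearMap.coe_comp', Function.comp_apply,
        ContinuousLinearEquiv.coe_coe, ContinuousLinearMap.prod_apply, smul_eq_mul]
      rw [Complex.equivRealProdCLM_symm_apply, h1, h2, hcdef]
      apply Complex.ext <;> simp <;> ring
    exact hM.differentiableAt
  -- periodicity of g₁, g₂ and boundedness of φ
  have hg₁per : ∀ (γ : ℝ × ℝ), (∀ q, f₁ (q + γ) = f₁ q) → (∀ q, μ (q + γ) = μ q) →
      ∀ q, g₁ (q + γ) = g₁ q := by
    intro γ hf hm q; simp [hg₁def, hf q, hm q]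
  have hg₂per : ∀ (γ : ℝ × ℝ), (∀ q, f₂ (q + γ) = f₂ q) → (∀ q, μ (q + γ) = μ q) →
      ∀ q, g₂ (q + γ) = g₂ q := by
    intro γ hf hm q; simp [hg₂def, hf q, hm q]
  have hgp11 := hg₁per γ₁ (fun q => (hf₁p q).1) (fun q => (hμp q).1)
  have hgp12 := hg₁per γ₂ (fun q => (hf₁p q).2) (fun q => (hμp q).2)
  have hgp21 := hg₂per γ₁ (fun q => (hf₂p q).1) (fun q => (hμp q).1)
  have hgp22 := hg₂per γ₂ (fun q => (hf₂p q).2) (fun q => (hμp q).2)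
  -- fundamental domain
  set K : Set (ℝ × ℝ) :=
    (fun st : ℝ × ℝ => st.1 • γ₁ + st.2 • γ₂) '' (Set.Icc 0 1 ×ˢ Set.Icc 0 1) with hKdef
  have hKcomp : IsCompact K := by
    apply (isCompact_Icc.prod isCompact_Icc).image
    fun_prop
  have hcard : Fintype.card (Fin 2) = Module.finrank ℝ (ℝ × ℝ) := by simp
  set B := basisOfLinearIndependentOfCardEqFinrank hind hcard with hBdef
  have hBcoe : ⇑B = ![γ₁, γ₂] := coe_basisOfLinearIndependentOfCardEqFinrank hind hcard
  have hred : ∀ q : ℝ × ℝ, ∃ r ∈ K, g₁ q = g₁ r ∧ g₂ q = g₂ r := by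
    intro q
    set a : ℝ := B.repr q 0 with hadef
    set b : ℝ := B.repr q 1 with hbdef
    have hq : q = a • γ₁ + b • γ₂ := by
      have := B.sum_repr q
      rw [Fin.sum_univ_two] at this
      rw [← this, hBcoe]
      simp [hadef, hbdef, hBcoe]
    set r : ℝ × ℝ := Int.fract a • γ₁ + Int.fract b • γ₂ with hrdef
    have hrK : r ∈ K := by
      refine ⟨(Int.fract a, Int.fract b), ?_, rfl⟩
      exact ⟨⟨Int.fract_nonneg a, (Int.fract_lt_one a).le⟩,
        ⟨Int.fract_nonneg b, (Int.fract_lt_one b).le⟩⟩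
    have hsplit : q = (r + (⌊b⌋ : ℤ) • γ₂) + (⌊a⌋ : ℤ) • γ₁ := by
      rw [hq, hrdef]
      rw [← Int.cast_smul_eq_zsmul ℝ (⌊a⌋) γ₁, ← Int.cast_smul_eq_zsmul ℝ (⌊b⌋) γ₂]
      simp only [Int.fract, sub_smul]
      abel
    refine ⟨r, hrK, ?_, ?_⟩
    · rw [hsplit, aux_zper g₁ γ₁ hgp11, aux_zper g₁ γ₂ hgp12]
    · rw [hsplit, aux_zper g₂ γ₁ hgp21, aux_zper g₂ γ₂ hgp22]
  have hbdd : Bornology.IsBounded (Set.range φ) := by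
    have hSc : IsCompact (Complex.equivRealProdCLM.symm '' ((g₁ '' K) ×ˢ (g₂ '' K))) := by
      apply IsCompact.image
      · apply IsCompact.prod
        · exact hKcomp.image
            (hf₁.continuous.mul (Real.continuous_exp.comp
              ((continuous_const.mul hμ.continuous).neg)))
        · exact hKcomp.image
            (hf₂.continuous.mul (Real.continuous_exp.comp
              ((continuous_const.mul hμ.continuous).neg)))
      · exact Complex.equivRealProdCLM.symm.continuous
    apply Bornology.IsBounded.subset hSc.isBounded
    rintro _ ⟨z, rfl⟩
    obtain ⟨r, hrK, h1, h2⟩ := hred (Complex.equivRealProdCLM z)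
    exact ⟨(g₁ (Complex.equivRealProdCLM z), g₂ (Complex.equivRealProdCLM z)),
      ⟨⟨r, hrK, h1.symm⟩, ⟨r, hrK, h2.symm⟩⟩, rfl⟩
  -- Liouville: φ is constant, hence g₁, g₂ are constant
  have hgconst : ∀ q q' : ℝ × ℝ, g₁ q = g₁ q' ∧ g₂ q = g₂ q' := by
    intro q q'
    have h := hφdiff.apply_eq_apply_of_bounded hbdd
      (Complex.equivRealProdCLM.symm q) (Complex.equivRealProdCLM.symm q')
    rw [hφdef] at h
    simp only [ContinuousLinearEquiv.apply_symm_apply] at h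
    have h2 := Complex.equivRealProdCLM.symm.injective h
    exact ⟨congrArg Prod.fst h2, congrArg Prod.snd h2⟩
  -- conclusion
  obtain ⟨q₀, hq₀⟩ := hnz
  refine ⟨(g₁ q₀, g₂ q₀), ?_, ?_⟩
  · intro h
    rw [Prod.ext_iff] at h
    obtain ⟨h1, h2⟩ := h
    have h1' : f₁ q₀ * Real.exp (-(2 * μ q₀)) = 0 := h1
    have h2' : f₂ q₀ * Real.exp (-(2 * μ q₀)) = 0 := h2
    have hEne := Real.exp_ne_zero (-(2 * μ q₀))
    rcases hq₀ with hq | hq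
    · exact hq ((mul_eq_zero.mp h1').resolve_right hEne)
    · exact hq ((mul_eq_zero.mp h2').resolve_right hEne)
  · intro q
    -- pdx g₁ = 0 since g₁ is constant
    have hg1c : g₁ = fun _ => g₁ q₀ := funext fun r => (hgconst r q₀).1
    have h0 : HasFDerivAt g₁ (0 : ℝ × ℝ →L[ℝ] ℝ) q := by
      rw [hg1c]; exact hasFDerivAt_const _ _
    have hzero : fderiv ℝ g₁ q (1, 0) = 0 := by rw [h0.fderiv]; rfl
    rw [hval₁ q (1, 0)] at hzero
    have hEne : Real.exp (-(2 * μ q)) ≠ 0 := Real.exp_ne_zero _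
    have hFx : fderiv ℝ f₁ q (1, 0) = 2 * f₁ q * fderiv ℝ μ q (1, 0) := by
      rcases mul_eq_zero.mp hzero with h | h
      · exact absurd h hEne
      · linarith
    -- from K11 : f₁ μₓ + f₂ μ_y = 0
    have hrel : f₁ q * fderiv ℝ μ q (1, 0) + f₂ q * fderiv ℝ μ q (0, 1) = 0 := by
      have := hK11 q
      rw [hFx] at this
      linarith [this]
    -- rewrite f₁ q, f₂ q in terms of the constants
    have hone : Real.exp (-(2 * μ q)) * Real.exp (2 * μ q) = 1 := by
      rw [← Real.exp_add]; simp
    have hf1q : f₁ q = g₁ q₀ * Real.exp (2 * μ q) := by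
      have h : f₁ q * Real.exp (-(2 * μ q)) = g₁ q₀ := (hgconst q q₀).1
      rw [← h, mul_assoc, hone, mul_one]
    have hf2q : f₂ q = g₂ q₀ * Real.exp (2 * μ q) := by
      have h : f₂ q * Real.exp (-(2 * μ q)) = g₂ q₀ := (hgconst q q₀).2
      rw [← h, mul_assoc, hone, mul_one]
    have h5 : Real.exp (2 * μ q) *
        (g₁ q₀ * fderiv ℝ μ q (1, 0) + g₂ q₀ * fderiv ℝ μ q (0, 1)) = 0 := by
      rw [hf1q, hf2q] at hrel
      linear_combination hrel
    rcases mul_eq_zero.mp h5 with h | h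
    · exact absurd h (Real.exp_ne_zero _)
    · exact h
end

section
/- Let γ be a closed unit-speed geodesic on a 2D Riemannian torus with metric e^{2μ}(dx²+dy²), with direction angle φ(t). If f is a trace-free symmetric rank m tensor field, then f_{i_1…i_m}(γ(t)) γ̇^{i_1}⋯γ̇^{i_m} = e^{-mμ}(f_{1…1} cos mφ + f_{1…12} sin mφ) along γ. In particular, if f is potential (f = dv), then ∮_γ e^{-mμ}(f_{1…1} cos mφ + f_{1…12} sin mφ) dt = 0. -/
open Real
open scoped BigOperators

/-- Component of the inner derivative `d v = σ∇v` of the rank `N` symmetric field `V`: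
`(dV)_w = (1/(N+1)) Σ_j ∇_{w_j} V_{w∖j}`. -/
noncomputable def dSym (μ : ℝ × ℝ → ℝ) {N : ℕ} (V : (Fin N → Fin 2) → ℝ × ℝ → ℝ)
    (w : Fin (N + 1) → Fin 2) (q : ℝ × ℝ) : ℝ :=
  (∑ j : Fin (N + 1), covDer μ V (w j) (fun k => w (j.succAbove k)) q) / (N + 1)

-- Lemma A
lemma lemA (μ : ℝ × ℝ → ℝ) {N : ℕ} (V : (Fin N → Fin 2) → ℝ × ℝ → ℝ)
    (q : ℝ × ℝ) (ξ : Fin 2 → ℝ) :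
    ∑ w : Fin (N+1) → Fin 2, dSym μ V w q * ∏ j, ξ (w j)
      = ∑ p : Fin 2, ∑ w : Fin N → Fin 2, covDer μ V p w q * (ξ p * ∏ j, ξ (w j)) := by
  unfold dSym
  have step1 : ∀ w : Fin (N+1) → Fin 2,
      (∑ j : Fin (N + 1), covDer μ V (w j) (fun k => w (j.succAbove k)) q) / (N + 1)
        * ∏ j, ξ (w j)
      = (∑ j : Fin (N + 1), covDer μ V (w j) (fun k => w (j.succAbove k)) q * ∏ j, ξ (w j))
          / (N+1) := by
    intro w
    rw [Finset.sum_div, Finset.sum_mul, Finset.sum_div]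
    exact Finset.sum_congr rfl fun i _ => by ring
  rw [Finset.sum_congr rfl fun w _ => step1 w, ← Finset.sum_div, Finset.sum_comm]
  have step2 : ∀ j : Fin (N+1),
      (∑ w : Fin (N+1) → Fin 2, covDer μ V (w j) (fun k => w (j.succAbove k)) q * ∏ i, ξ (w i))
      = ∑ p : Fin 2, ∑ w : Fin N → Fin 2, covDer μ V p w q * (ξ p * ∏ i, ξ (w i)) := by
    intro j
    show _ = ∑ p : Fin 2, ∑ v : Fin N → Fin 2, covDer μ V p v q * (ξ p * ∏ i, ξ (v i))
    rw [← Fintype.sum_prod_type']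
    apply Fintype.sum_equiv (Fin.insertNthEquiv (fun _ => Fin 2) j).symm
    intro w
    simp only [Fin.insertNthEquiv_symm_apply]
    rw [Fin.prod_univ_succAbove (fun i => ξ (w i)) j]
    rfl
  rw [Finset.sum_congr rfl fun j _ => step2 j, Finset.sum_const, Finset.card_univ]
  simp only [Fintype.card_fin, nsmul_eq_mul]
  rw [show ((N+1 : ℕ):ℝ) = (N:ℝ)+1 by push_cast; ring, mul_comm, mul_div_assoc, div_self (by positivity : ((N:ℝ)+1) ≠ 0), mul_one]

-- Lemma B
lemma lemB (μ : ℝ × ℝ → ℝ) {N : ℕ} (V : (Fin N → Fin 2) → ℝ × ℝ → ℝ)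
    (q : ℝ × ℝ) (ξ : Fin 2 → ℝ) (p : Fin 2) (j : Fin N) :
    ∑ w : Fin N → Fin 2, ∑ r : Fin 2,
        chr μ p (w j) r q * V (Function.update w j r) q * (ξ p * ∏ k, ξ (w k))
      = ∑ w : Fin N → Fin 2, ∑ i : Fin 2,
        chr μ p i (w j) q * V w q * (ξ p * (ξ i * ∏ k ∈ Finset.univ.erase j, ξ (w k))) := by
  have hinv : Function.Involutive
      (fun x : (Fin N → Fin 2) × Fin 2 => (Function.update x.1 j x.2, x.1 j)) := by
    intro x
    simp [Function.update_idem, Function.update_eq_self]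
  rw [← Fintype.sum_prod_type', ← Fintype.sum_prod_type']
  refine (Fintype.sum_equiv hinv.toPerm _ _ ?_).symm
  rintro ⟨w, i⟩
  simp only [Function.Involutive.coe_toPerm, Function.update_self, Function.update_idem,
    Function.update_eq_self]
  have hprod : (∏ k, ξ (Function.update w j i k))
      = ξ i * ∏ k ∈ Finset.univ.erase j, ξ (w k) := by
    have : (fun k => ξ (Function.update w j i k))
        = Function.update (fun k => ξ (w k)) j (ξ i) := by
      funext k
      rcases eq_or_ne k j with h | h <;> simp [Function.update_apply, h]
    rw [this, Finset.prod_update_of_mem (Finset.mem_univ j), Finset.erase_eq]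
  rw [hprod]

-- Lemma C
lemma lemC (μ : ℝ × ℝ → ℝ) {N : ℕ} (V : (Fin N → Fin 2) → ℝ × ℝ → ℝ)
    (q : ℝ × ℝ) (ξ dξ : Fin 2 → ℝ)
    (hgeo : ∀ r, dξ r = -∑ p : Fin 2, ∑ i : Fin 2, chr μ p i r q * (ξ p * ξ i)) :
    ∑ w : Fin (N+1) → Fin 2, dSym μ V w q * ∏ j, ξ (w j)
      = ∑ w : Fin N → Fin 2, ((∑ p : Fin 2, pder p (V w) q * ξ p) * ∏ j, ξ (w j)
          + V w q * ∑ j : Fin N, (∏ k ∈ Finset.univ.erase j, ξ (w k)) * dξ (w j)) := by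
  rw [lemA]
  simp only [covDer, sub_mul, Finset.sum_sub_distrib]
  have h1 : ∑ p : Fin 2, ∑ w : Fin N → Fin 2, pder p (V w) q * (ξ p * ∏ k, ξ (w k))
      = ∑ w : Fin N → Fin 2, (∑ p : Fin 2, pder p (V w) q * ξ p) * ∏ k, ξ (w k) := by
    rw [Finset.sum_comm]
    exact Finset.sum_congr rfl fun w _ => by rw [Finset.sum_mul]; exact Finset.sum_congr rfl fun p _ => by ring
  have h2 : ∑ p : Fin 2, ∑ w : Fin N → Fin 2,
        (∑ j : Fin N, ∑ r : Fin 2, chr μ p (w j) r q * V (Function.update w j r) q)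
          * (ξ p * ∏ k, ξ (w k))
      = ∑ w : Fin N → Fin 2, V w q *
          ∑ j : Fin N, (∏ k ∈ Finset.univ.erase j, ξ (w k)) * (-dξ (w j)) := by
    have e1 : ∀ p : Fin 2, ∑ w : Fin N → Fin 2,
        (∑ j : Fin N, ∑ r : Fin 2, chr μ p (w j) r q * V (Function.update w j r) q)
          * (ξ p * ∏ k, ξ (w k))
        = ∑ j : Fin N, ∑ w : Fin N → Fin 2, ∑ r : Fin 2,
            chr μ p (w j) r q * V (Function.update w j r) q * (ξ p * ∏ k, ξ (w k)) := by
      intro p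
      rw [Finset.sum_comm]
      exact Finset.sum_congr rfl fun w _ => by
        rw [Finset.sum_mul]
        exact Finset.sum_congr rfl fun jj _ => by rw [Finset.sum_mul]
    calc ∑ p : Fin 2, ∑ w : Fin N → Fin 2,
        (∑ j : Fin N, ∑ r : Fin 2, chr μ p (w j) r q * V (Function.update w j r) q)
          * (ξ p * ∏ k, ξ (w k))
        = ∑ p : Fin 2, ∑ j : Fin N, ∑ w : Fin N → Fin 2, ∑ i : Fin 2,
            chr μ p i (w j) q * V w q * (ξ p * (ξ i * ∏ k ∈ Finset.univ.erase j, ξ (w k))) := by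
          exact Finset.sum_congr rfl fun p _ => by
            rw [e1 p]
            exact Finset.sum_congr rfl fun j _ => lemB μ V q ξ p j
      _ = ∑ w : Fin N → Fin 2, ∑ j : Fin N,
            (∑ p : Fin 2, ∑ i : Fin 2, chr μ p i (w j) q * (ξ p * ξ i)) *
              (V w q * ∏ k ∈ Finset.univ.erase j, ξ (w k)) := by
          calc ∑ p : Fin 2, ∑ j : Fin N, (∑ w : Fin N → Fin 2, ∑ i : Fin 2,
                chr μ p i (w j) q * V w q * (ξ p * (ξ i * ∏ k ∈ Finset.univ.erase j, ξ (w k))))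
              = ∑ j : Fin N, ∑ p : Fin 2, (∑ w : Fin N → Fin 2, ∑ i : Fin 2,
                chr μ p i (w j) q * V w q * (ξ p * (ξ i * ∏ k ∈ Finset.univ.erase j, ξ (w k)))) :=
              Finset.sum_comm
            _ = ∑ j : Fin N, ∑ w : Fin N → Fin 2, ∑ p : Fin 2, ∑ i : Fin 2,
                chr μ p i (w j) q * V w q * (ξ p * (ξ i * ∏ k ∈ Finset.univ.erase j, ξ (w k))) :=
              Finset.sum_congr rfl fun j _ => Finset.sum_comm
            _ = ∑ w : Fin N → Fin 2, ∑ j : Fin N, ∑ p : Fin 2, ∑ i : Fin 2,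
                chr μ p i (w j) q * V w q * (ξ p * (ξ i * ∏ k ∈ Finset.univ.erase j, ξ (w k))) :=
              Finset.sum_comm
            _ = ∑ w : Fin N → Fin 2, ∑ j : Fin N,
                (∑ p : Fin 2, ∑ i : Fin 2, chr μ p i (w j) q * (ξ p * ξ i)) *
                  (V w q * ∏ k ∈ Finset.univ.erase j, ξ (w k)) := by
              refine Finset.sum_congr rfl fun w _ => Finset.sum_congr rfl fun j _ => ?_
              rw [Finset.sum_mul]
              refine Finset.sum_congr rfl fun p _ => ?_
              rw [Finset.sum_mul]
              exact Finset.sum_congr rfl fun i _ => by ring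
      _ = ∑ w : Fin N → Fin 2, V w q *
            ∑ j : Fin N, (∏ k ∈ Finset.univ.erase j, ξ (w k)) * (-dξ (w j)) := by
          refine Finset.sum_congr rfl fun w _ => ?_
          rw [Finset.mul_sum]
          refine Finset.sum_congr rfl fun j _ => ?_
          rw [show (∑ p : Fin 2, ∑ i : Fin 2, chr μ p i (w j) q * (ξ p * ξ i)) = -dξ (w j) by
            rw [hgeo (w j)]; ring]
          ring
  rw [h1, h2, ← Finset.sum_sub_distrib]
  refine Finset.sum_congr rfl fun w _ => ?_
  have hneg : ∑ j : Fin N, (∏ k ∈ Finset.univ.erase j, ξ (w k)) * (-dξ (w j))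
      = -∑ j : Fin N, (∏ k ∈ Finset.univ.erase j, ξ (w k)) * dξ (w j) := by
    rw [← Finset.sum_neg_distrib]
    exact Finset.sum_congr rfl fun j _ => by ring
  rw [hneg]
  ring

lemma hasDerivAt_comp2 (f : ℝ × ℝ → ℝ) (hf : ContDiff ℝ (⊤ : ℕ∞) f) (γ : ℝ → ℝ × ℝ)
    (v : ℝ × ℝ) (t : ℝ) (hγ : HasDerivAt γ v t) :
    HasDerivAt (fun s => f (γ s)) (pder 0 f (γ t) * v.1 + pder 1 f (γ t) * v.2) t := by
  have hd : HasFDerivAt f (fderiv ℝ f (γ t)) (γ t) :=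
    (hf.differentiable (by simp) (γ t)).hasFDerivAt
  have h : HasDerivAt (fun s => f (γ s)) _ t := hd.comp_hasDerivAt t hγ
  convert h using 1
  have hv : v = v.1 • ((1:ℝ),(0:ℝ)) + v.2 • ((0:ℝ),(1:ℝ)) := by
    ext <;> simp
  conv_rhs => rw [hv]
  rw [map_add, map_smul, map_smul]
  simp [pder]
  ring

noncomputable def Xi (μ : ℝ × ℝ → ℝ) (γ : ℝ → ℝ × ℝ) (φ : ℝ → ℝ) (p : Fin 2) (t : ℝ) : ℝ :=
  if p = 0 then Real.exp (-μ (γ t)) * Real.cos (φ t) else Real.exp (-μ (γ t)) * Real.sin (φ t)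

noncomputable def dXi (μ : ℝ × ℝ → ℝ) (γ : ℝ → ℝ × ℝ) (φ : ℝ → ℝ) (r : Fin 2) (t : ℝ) : ℝ :=
  -∑ p : Fin 2, ∑ i : Fin 2, chr μ p i r (γ t) * (Xi μ γ φ p t * Xi μ γ φ i t)

section geo
variable (μ : ℝ × ℝ → ℝ) (γ : ℝ → ℝ × ℝ) (φ : ℝ → ℝ)
  (hμ : ContDiff ℝ (⊤ : ℕ∞) μ)
  (hγ' : ∀ t, HasDerivAt γ
    (Real.exp (-μ (γ t)) * Real.cos (φ t), Real.exp (-μ (γ t)) * Real.sin (φ t)) t)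
  (hφ' : ∀ t, HasDerivAt φ
    (Real.exp (-μ (γ t)) *
      (-(pder 0 μ (γ t)) * Real.sin (φ t) + pder 1 μ (γ t) * Real.cos (φ t))) t)

include hμ hγ' in
lemma hasDerivAt_muγ (t : ℝ) : HasDerivAt (fun s => μ (γ s))
    (pder 0 μ (γ t) * Xi μ γ φ 0 t + pder 1 μ (γ t) * Xi μ γ φ 1 t) t := by
  have h := hasDerivAt_comp2 μ hμ γ _ t (hγ' t)
  simpa [Xi] using h

include hμ hγ' in
lemma hasDerivAt_E (t : ℝ) : HasDerivAt (fun s => Real.exp (-μ (γ s)))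
    (-(pder 0 μ (γ t) * Xi μ γ φ 0 t + pder 1 μ (γ t) * Xi μ γ φ 1 t)
      * Real.exp (-μ (γ t))) t := by
  have h := ((hasDerivAt_muγ μ γ φ hμ hγ' t).neg).exp
  simpa [mul_comm] using h

include hμ hγ' hφ' in
lemma hasDerivAt_Xi (p : Fin 2) (t : ℝ) :
    HasDerivAt (Xi μ γ φ p) (dXi μ γ φ p t) t := by
  fin_cases p
  · show HasDerivAt (Xi μ γ φ 0) (dXi μ γ φ 0 t) t
    rw [show Xi μ γ φ 0 = fun s => Real.exp (-μ (γ s)) * Real.cos (φ s) from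
      funext fun s => by simp [Xi]]
    have h : HasDerivAt (fun s => Real.exp (-μ (γ s)) * Real.cos (φ s)) _ t :=
      (hasDerivAt_E μ γ φ hμ hγ' t).fun_mul ((hφ' t).cos)
    convert h using 1
    simp only [dXi, Xi, chr, pder, Fin.sum_univ_two]
    norm_num
    ring
  · show HasDerivAt (Xi μ γ φ 1) (dXi μ γ φ 1 t) t
    rw [show Xi μ γ φ 1 = fun s => Real.exp (-μ (γ s)) * Real.sin (φ s) from
      funext fun s => by simp [Xi]]
    have h : HasDerivAt (fun s => Real.exp (-μ (γ s)) * Real.sin (φ s)) _ t :=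
      (hasDerivAt_E μ γ φ hμ hγ' t).fun_mul ((hφ' t).sin)
    convert h using 1
    simp only [dXi, Xi, chr, pder, Fin.sum_univ_two]
    norm_num
    ring
end geo

lemma sign_re (A B : ℝ) (k : ℕ) :
    ((((A:ℂ) - B*Complex.I) * Complex.I ^ k).re)
      = (-1:ℝ)^(k/2) * (if k % 2 = 0 then A else B) := by
  rcases Nat.even_or_odd k with ⟨t, ht⟩ | ⟨t, ht⟩
  · subst ht
    have h1 : (Complex.I:ℂ) ^ (t + t) = (((-1:ℝ)^t : ℝ) : ℂ) := by
      rw [← two_mul, pow_mul, Complex.I_sq]; push_cast; ring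
    have h2 : (t + t) / 2 = t := by omega
    have h3 : (t + t) % 2 = 0 := by omega
    rw [h1, h2, h3, mul_comm, Complex.re_ofReal_mul]
    simp
  · subst ht
    have h1 : (Complex.I:ℂ) ^ (2*t + 1) = (((-1:ℝ)^t : ℝ) : ℂ) * Complex.I := by
      rw [pow_succ, pow_mul, Complex.I_sq]; push_cast; ring
    have h2 : (2*t + 1) / 2 = t := by omega
    have h3 : (2*t + 1) % 2 = 1 := by omega
    rw [h1, h2, h3, show ((A:ℂ) - B*Complex.I) * ((((-1:ℝ)^t : ℝ):ℂ) * Complex.I)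
        = (((-1:ℝ)^t : ℝ):ℂ) * (((A:ℂ) - B*Complex.I) * Complex.I) from by ring,
      Complex.re_ofReal_mul]
    simp [Complex.mul_re]

lemma part1_core (A B c s : ℝ) (n : ℕ) :
    (∑ w : Fin n → Fin 2, ((-1:ℝ)^((∑ j, ((w j : ℕ)))/2) *
        (if (∑ j, ((w j : ℕ))) % 2 = 0 then A else B)) *
        (∏ j, (if w j = 0 then c else s)))
      = (((A:ℂ) - B*Complex.I) * ((c:ℂ) + s*Complex.I)^n).re := by
  have key : ∀ w : Fin n → Fin 2,
      ((-1:ℝ)^((∑ j, ((w j : ℕ)))/2) *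
        (if (∑ j, ((w j : ℕ))) % 2 = 0 then A else B)) *
        (∏ j, (if w j = 0 then c else s))
      = (((A:ℂ) - B*Complex.I) * ∏ j, (if w j = 0 then (c:ℂ) else s*Complex.I)).re := by
    intro w
    have hprod : (∏ j, (if w j = 0 then (c:ℂ) else s*Complex.I))
        = (Complex.I ^ (∑ j, ((w j : ℕ)))) * ((∏ j, (if w j = 0 then c else s) : ℝ) : ℂ) := by
      push_cast
      rw [← Finset.prod_pow_eq_pow_sum, ← Finset.prod_mul_distrib]
      apply Finset.prod_congr rfl
      intro j _
      rcases Fin.exists_fin_two.mp ⟨w j, rfl⟩ with h | h <;> simp [h] <;> ring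
    rw [hprod, show ((A:ℂ) - B*Complex.I) * ((Complex.I ^ (∑ j, ((w j : ℕ)))) *
          ((∏ j, (if w j = 0 then c else s) : ℝ) : ℂ))
        = ((∏ j, (if w j = 0 then c else s) : ℝ) : ℂ) *
          (((A:ℂ) - B*Complex.I) * Complex.I ^ (∑ j, ((w j : ℕ)))) from by ring,
      Complex.re_ofReal_mul, sign_re]
    ring
  rw [Finset.sum_congr rfl (fun w _ => key w), ← Complex.re_sum, ← Finset.mul_sum]
  congr 2
  rw [← Fintype.sum_pow (fun p : Fin 2 => if p = 0 then (c:ℂ) else s*Complex.I) n]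
  simp

lemma deMoivre (A B E ph : ℝ) (n : ℕ) :
    (((A:ℂ) - B*Complex.I) *
      (((E * Real.cos ph : ℝ):ℂ) + ((E * Real.sin ph : ℝ):ℂ)*Complex.I)^n).re
      = E^n * (A * Real.cos (n*ph) + B * Real.sin (n*ph)) := by
  have h1 : ((E * Real.cos ph : ℝ):ℂ) + ((E * Real.sin ph : ℝ):ℂ)*Complex.I
      = (E:ℂ) * Complex.exp ((ph:ℂ) * Complex.I) := by
    rw [Complex.exp_mul_I, ← Complex.ofReal_cos, ← Complex.ofReal_sin]
    push_cast
    ring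
  rw [h1, mul_pow, ← Complex.exp_nat_mul,
    show ((n:ℂ)) * ((ph:ℂ) * Complex.I) = ((n * ph : ℝ):ℂ) * Complex.I by push_cast; ring,
    Complex.exp_mul_I, ← Complex.ofReal_cos, ← Complex.ofReal_sin,
    show ((E:ℂ))^n = (((E^n : ℝ)):ℂ) by push_cast; ring,
    show ((A:ℂ) - B*Complex.I) * (((E^n : ℝ):ℂ) *
        (((Real.cos (n*ph) : ℝ):ℂ) + ((Real.sin (n*ph) : ℝ):ℂ)*Complex.I))
      = ((E^n : ℝ):ℂ) * (((A:ℂ) - B*Complex.I) *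
        (((Real.cos (n*ph) : ℝ):ℂ) + ((Real.sin (n*ph) : ℝ):ℂ)*Complex.I)) by ring,
    Complex.re_ofReal_mul]
  congr 1
  simp only [Complex.mul_re, Complex.mul_im, Complex.sub_re, Complex.sub_im,
    Complex.add_re, Complex.add_im, Complex.ofReal_re, Complex.ofReal_im,
    Complex.I_re, Complex.I_im]
  ring

lemma part1 (m : ℕ) (μ a b : ℝ × ℝ → ℝ) (q : ℝ × ℝ) (ph : ℝ) :
    (∑ w : Fin (m + 1) → Fin 2, tfComp a b w q *
        ∏ j, (if w j = 0 then Real.exp (-μ q) * Real.cos ph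
              else Real.exp (-μ q) * Real.sin ph))
      = Real.exp (-((m : ℝ) + 1) * μ q) *
          (a q * Real.cos (((m : ℝ) + 1) * ph) + b q * Real.sin (((m : ℝ) + 1) * ph)) := by
  have h := part1_core (a q) (b q) (Real.exp (-μ q) * Real.cos ph)
    (Real.exp (-μ q) * Real.sin ph) (m+1)
  simp only [tfComp]
  rw [h, deMoivre (a q) (b q) (Real.exp (-μ q)) ph (m+1), ← Real.exp_nat_mul]
  have e1 : ((m+1 : ℕ):ℝ) * (-μ q) = -((m : ℝ) + 1) * μ q := by push_cast; ring
  have e2 : ((m+1 : ℕ):ℝ) * ph = ((m : ℝ) + 1) * ph := by push_cast; ring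
  rw [e1, e2]

/-- On a surface with metric `e^{2μ}(dx²+dy²)`, for a trace-free symmetric rank `m+1`
tensor field with `a = f_{1…1}`, `b = f_{1…12}`:
(1) at a point `q` in a unit direction with angle `φ`, i.e. `ξ = (e^{-μ}cos φ, e^{-μ}sin φ)`,
one has `f_{i₁…i_{m+1}} ξ^{i₁}⋯ξ^{i_{m+1}} = e^{-(m+1)μ}(a cos((m+1)φ) + b sin((m+1)φ))`;
(2) on the torus, if `f` is potential (`f = d V` for a symmetric rank `m` field `V` on
the torus) then the integral of this quantity over every closed unit-speed geodesic
vanishes. -/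
theorem stmt_16 (m : ℕ) (μ a b : ℝ × ℝ → ℝ)
    (hμ : ContDiff ℝ (⊤ : ℕ∞) μ) (ha : ContDiff ℝ (⊤ : ℕ∞) a) (hb : ContDiff ℝ (⊤ : ℕ∞) b) :
    (∀ (q : ℝ × ℝ) (φ : ℝ),
      (∑ w : Fin (m + 1) → Fin 2, tfComp a b w q *
          ∏ j, (if w j = 0 then Real.exp (-μ q) * Real.cos φ
                else Real.exp (-μ q) * Real.sin φ))
        = Real.exp (-((m : ℝ) + 1) * μ q) *
            (a q * Real.cos (((m : ℝ) + 1) * φ) + b q * Real.sin (((m : ℝ) + 1) * φ))) ∧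
    (∀ (γ₁ γ₂ : ℝ × ℝ), LinearIndependent ℝ ![γ₁, γ₂] →
      (∀ q, μ (q + γ₁) = μ q ∧ μ (q + γ₂) = μ q) →
      (∀ q, a (q + γ₁) = a q ∧ a (q + γ₂) = a q) →
      (∀ q, b (q + γ₁) = b q ∧ b (q + γ₂) = b q) →
      ∀ V : (Fin m → Fin 2) → ℝ × ℝ → ℝ,
        (∀ w, ContDiff ℝ (⊤ : ℕ∞) (V w)) →
        (∀ w q, V w (q + γ₁) = V w q ∧ V w (q + γ₂) = V w q) →
        (∀ w w' : Fin m → Fin 2, (∑ j, ((w j : ℕ))) = (∑ j, ((w' j : ℕ))) → V w = V w') →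
        (∀ (w : Fin (m + 1) → Fin 2) (q : ℝ × ℝ), tfComp a b w q = dSym μ V w q) →
        ∀ (γ : ℝ → ℝ × ℝ) (φ : ℝ → ℝ) (T : ℝ) (ℓ : ℤ), 0 < T →
          (∀ t, HasDerivAt γ
            (Real.exp (-μ (γ t)) * Real.cos (φ t),
             Real.exp (-μ (γ t)) * Real.sin (φ t)) t) →
          (∀ t, HasDerivAt φ
            (Real.exp (-μ (γ t)) *
              (-(pder 0 μ (γ t)) * Real.sin (φ t) + pder 1 μ (γ t) * Real.cos (φ t))) t) →
          (∀ t, γ (t + T) = γ t) → (∀ t, φ (t + T) = φ t + 2 * π * ℓ) →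
          (∫ t in (0:ℝ)..T,
            Real.exp (-((m : ℝ) + 1) * μ (γ t)) *
              (a (γ t) * Real.cos (((m : ℝ) + 1) * φ t) +
               b (γ t) * Real.sin (((m : ℝ) + 1) * φ t))) = 0) := by
  classical
  have hpart1 := part1 m μ a b
  refine ⟨fun q ph => hpart1 q ph, ?_⟩
  intro γ₁ γ₂ _ _ _ _ V hV _ _ hpot γ φ T ℓ hT hγ' hφ' hγper hφper
  have hγ'' : ∀ t, HasDerivAt γ (Xi μ γ φ 0 t, Xi μ γ φ 1 t) t := by
    intro t; simpa [Xi] using hγ' t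
  have hγc : Continuous γ := Differentiable.continuous fun t => (hγ' t).differentiableAt
  have hφc : Continuous φ := Differentiable.continuous fun t => (hφ' t).differentiableAt
  have hΞd : ∀ (p : Fin 2) (t : ℝ), HasDerivAt (Xi μ γ φ p) (dXi μ γ φ p t) t :=
    fun p t => hasDerivAt_Xi μ γ φ hμ hγ' hφ' p t
  have hVd : ∀ (w : Fin m → Fin 2) (t : ℝ), HasDerivAt (fun s => V w (γ s))
      (∑ p : Fin 2, pder p (V w) (γ t) * Xi μ γ φ p t) t := by
    intro w t
    have h := hasDerivAt_comp2 (V w) (hV w) γ _ t (hγ'' t)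
    simpa [Fin.sum_univ_two] using h
  -- derivative of the contracted potential
  have hPd : ∀ t : ℝ, HasDerivAt (fun s => ∑ w : Fin m → Fin 2, V w (γ s) * ∏ j, Xi μ γ φ (w j) s)
      (∑ w : Fin m → Fin 2, ((∑ p : Fin 2, pder p (V w) (γ t) * Xi μ γ φ p t)
          * ∏ j, Xi μ γ φ (w j) t
        + V w (γ t) * ∑ j : Fin m,
            (∏ k ∈ Finset.univ.erase j, Xi μ γ φ (w k) t) * dXi μ γ φ (w j) t)) t := by
    intro t
    refine HasDerivAt.fun_sum fun w _ => ?_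
    have hprod := HasDerivAt.fun_finsetProd (u := (Finset.univ : Finset (Fin m)))
      (f := fun j s => Xi μ γ φ (w j) s) (f' := fun j => dXi μ γ φ (w j) t)
      (x := t) (fun j _ => hΞd (w j) t)
    have h := (hVd w t).fun_mul hprod
    simpa [smul_eq_mul] using h
  -- identification of the derivative with the integrand
  have hGeq : ∀ t : ℝ,
      (∑ w : Fin m → Fin 2, ((∑ p : Fin 2, pder p (V w) (γ t) * Xi μ γ φ p t)
          * ∏ j, Xi μ γ φ (w j) t
        + V w (γ t) * ∑ j : Fin m,
            (∏ k ∈ Finset.univ.erase j, Xi μ γ φ (w k) t) * dXi μ γ φ (w j) t))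
      = Real.exp (-((m : ℝ) + 1) * μ (γ t)) *
          (a (γ t) * Real.cos (((m : ℝ) + 1) * φ t) +
           b (γ t) * Real.sin (((m : ℝ) + 1) * φ t)) := by
    intro t
    rw [← hpart1 (γ t) (φ t)]
    have hc := lemC μ V (γ t) (fun p => Xi μ γ φ p t) (fun p => dXi μ γ φ p t)
      (fun r => rfl)
    rw [← hc]
    refine Finset.sum_congr rfl fun w _ => ?_
    rw [hpot w (γ t)]
    refine congrArg₂ (· * ·) rfl (Finset.prod_congr rfl fun j _ => ?_)
    simp [Xi]
  -- continuity of the integrand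
  have hμc := hμ.continuous
  have hac := ha.continuous
  have hbc := hb.continuous
  have hcont : Continuous fun t => Real.exp (-((m : ℝ) + 1) * μ (γ t)) *
      (a (γ t) * Real.cos (((m : ℝ) + 1) * φ t) +
       b (γ t) * Real.sin (((m : ℝ) + 1) * φ t)) := by
    apply Continuous.mul
    · exact Real.continuous_exp.comp (continuous_const.mul (hμc.comp hγc))
    · exact ((hac.comp hγc).mul (Real.continuous_cos.comp (continuous_const.mul hφc))).add
        ((hbc.comp hγc).mul (Real.continuous_sin.comp (continuous_const.mul hφc)))
  have key := intervalIntegral.integral_eq_sub_of_hasDerivAt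
    (a := (0:ℝ)) (b := T)
    (f := fun s => ∑ w : Fin m → Fin 2, V w (γ s) * ∏ j, Xi μ γ φ (w j) s)
    (f' := fun t => Real.exp (-((m : ℝ) + 1) * μ (γ t)) *
      (a (γ t) * Real.cos (((m : ℝ) + 1) * φ t) +
       b (γ t) * Real.sin (((m : ℝ) + 1) * φ t)))
    (fun t _ => by beta_reduce; rw [← hGeq t]; exact hPd t)
    (hcont.intervalIntegrable 0 T)
  beta_reduce at key
  rw [key]
  -- periodicity
  have hγT : γ T = γ 0 := by have := hγper 0; rwa [zero_add] at this
  have hφT : φ T = φ 0 + 2 * π * ℓ := by have := hφper 0; rwa [zero_add] at this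
  have hΞT : ∀ p : Fin 2, Xi μ γ φ p T = Xi μ γ φ p 0 := by
    intro p
    simp only [Xi, hγT, hφT, show 2 * π * (ℓ:ℝ) = (ℓ:ℝ) * (2 * π) by ring]
    rw [Real.cos_add_int_mul_two_pi, Real.sin_add_int_mul_two_pi]
  have : (∑ w : Fin m → Fin 2, V w (γ T) * ∏ j, Xi μ γ φ (w j) T)
      = ∑ w : Fin m → Fin 2, V w (γ 0) * ∏ j, Xi μ γ φ (w j) 0 := by
    refine Finset.sum_congr rfl fun w _ => ?_
    rw [hγT]
    congr 1
    exact Finset.prod_congr rfl fun j _ => hΞT (w j)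
  rw [this, sub_self]
end
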